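/- arXiv:1008.3241 — 2 statements merged into one kernel-verified Lean document; each statement's English description precedes it below -/
import Mathlib

section
/- Let S be a semigroup satisfying conditions (A), (B), (C), and let Q be the set of ~-classes of Σ with the multiplication [a,b][c,d] = [xa, yd]. Then this multiplication is associative: ([a,b][c,d])[p,q] = [a,b]([c,d][p,q]) for all [a,b], [c,d], [p,q] ∈ Q. -/
/-- The bicyclic semigroup `𝓑` carried by `ℕ × ℕ`, an element being `(r, l)`;
`(m,n)(p,q) = (m - n + t, q - p + t)` with `t = max n p`. -/
structure Bicyclic where
  r : ℕ
  l : ℕ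

instance : Mul Bicyclic :=
  ⟨fun x y => ⟨x.r + (max x.l y.r - x.l), y.l + (max x.l y.r - y.r)⟩⟩

/-- The inverse `(m,n)⁻¹ = (n,m)` in the bicyclic semigroup. -/
def Bicyclic.inv (x : Bicyclic) : Bicyclic := ⟨x.l, x.r⟩

/-- `T` is a left I-order in the bicyclic semigroup `𝓑`. -/
def IsLeftIOrderBic (T : Set Bicyclic) : Prop :=
  ∀ q : Bicyclic, ∃ a ∈ T, ∃ b ∈ T, q = a.inv * b

/-- `r a`, the first coordinate of `φ a` in `𝓑`. -/
def rr {S : Type*} [Mul S] (φ : S →ₙ* Bicyclic) (a : S) : ℕ := (φ a).r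

/-- `l a`, the second coordinate of `φ a` in `𝓑`. -/
def ll {S : Type*} [Mul S] (φ : S →ₙ* Bicyclic) (a : S) : ℕ := (φ a).l

/-- Condition (A): the image of `φ` is a left I-order in `𝓑`. -/
def CondA {S : Type*} [Mul S] (φ : S →ₙ* Bicyclic) : Prop :=
  IsLeftIOrderBic (Set.range (⇑φ))

/-- Condition (B)(i): if `l x, l y ≥ r a` and `x * a = y * a` then `x = y`. -/
def CondBi {S : Type*} [Mul S] (φ : S →ₙ* Bicyclic) : Prop :=
  ∀ x y a : S, rr φ a ≤ ll φ x → rr φ a ≤ ll φ y → x * a = y * a → x = y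

/-- Condition (B)(ii): if `r x, r y ≥ l a` and `a * x = a * y` then `x = y`. -/
def CondBii {S : Type*} [Mul S] (φ : S →ₙ* Bicyclic) : Prop :=
  ∀ x y a : S, ll φ a ≤ rr φ x → ll φ a ≤ rr φ y → a * x = a * y → x = y

/-- Condition (C): for all `b c` there are `x y` with `x * b = y * c`,
`r x = r y`, `l x = r b - l b + max (l b) (l c)` and
`l y = r c - l c + max (l b) (l c)`. -/
def CondC {S : Type*} [Mul S] (φ : S →ₙ* Bicyclic) : Prop :=
  ∀ b c : S, ∃ x y : S, x * b = y * c ∧ rr φ x = rr φ y ∧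
    ll φ x = rr φ b + (max (ll φ b) (ll φ c) - ll φ b) ∧
    ll φ y = rr φ c + (max (ll φ b) (ll φ c) - ll φ c)

/-- `Σ = {(a,b) ∈ S × S : r a = r b}`. -/
abbrev Sig {S : Type*} [Mul S] (φ : S →ₙ* Bicyclic) : Type _ :=
  {p : S × S // rr φ p.1 = rr φ p.2}

/-- The relation `∼` on pairs: `(a,b) ∼ (c,d)` iff there are `x y` with
`x * a = y * c`, `x * b = y * d`, `l x = r a`, `l y = r c`, `r x = r y`. -/
def simP {S : Type*} [Mul S] (φ : S →ₙ* Bicyclic) (p q : S × S) : Prop :=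
  ∃ x y : S, x * p.1 = y * q.1 ∧ x * p.2 = y * q.2 ∧
    ll φ x = rr φ p.1 ∧ ll φ y = rr φ q.1 ∧ rr φ x = rr φ y

/-- The relation `∼` on `Σ`. -/
def sim {S : Type*} [Mul S] (φ : S →ₙ* Bicyclic) (p q : Sig φ) : Prop :=
  simP φ p.1 q.1

theorem rr_mul {S : Type*} [Mul S] (φ : S →ₙ* Bicyclic) (x a : S) :
    rr φ (x * a) = rr φ x + (max (ll φ x) (rr φ a) - ll φ x) := by
  simp only [rr, ll, map_mul]; rfl

theorem rr_mul_eq {S : Type*} [Mul S] (φ : S →ₙ* Bicyclic) {x a : S}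
    (h : rr φ a ≤ ll φ x) : rr φ (x * a) = rr φ x := by
  have h1 := rr_mul φ x a
  have h2 : max (ll φ x) (rr φ a) = ll φ x := max_eq_left h
  omega

theorem sig_mul_ok {S : Type*} [Mul S] (φ : S →ₙ* Bicyclic) {a b c d x y : S}
    (hab : rr φ a = rr φ b) (hcd : rr φ c = rr φ d)
    (hx : ll φ x = rr φ b + (max (ll φ b) (ll φ c) - ll φ b))
    (hy : ll φ y = rr φ c + (max (ll φ b) (ll φ c) - ll φ c))
    (hr : rr φ x = rr φ y) : rr φ (x * a) = rr φ (y * d) := by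
  have h1 := rr_mul_eq φ (x := x) (a := a)
    (by have := le_max_left (ll φ b) (ll φ c); omega)
  have h2 := rr_mul_eq φ (x := y) (a := d)
    (by have := le_max_right (ll φ b) (ll φ c); omega)
  omega

/-- The set `Q` of `∼`-classes of `Σ`. -/
def QT {S : Type*} [Mul S] (φ : S →ₙ* Bicyclic) : Type _ := Quot (sim φ)

/-- The `∼`-class `[a,b]` of an element of `Σ`. -/
def cls {S : Type*} [Mul S] (φ : S →ₙ* Bicyclic) (p : Sig φ) : QT φ :=
  Quot.mk _ p

/-- Packaging `(a, b)` with `r a = r b` as an element of `Σ`. -/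
def mkSig {S : Type*} [Mul S] (φ : S →ₙ* Bicyclic) (a b : S)
    (h : rr φ a = rr φ b) : Sig φ := ⟨(a, b), h⟩

/-- A chosen witness `x` from condition (C) applied to `b, c`. -/
noncomputable def cx {S : Type*} [Mul S] {φ : S →ₙ* Bicyclic} (hC : CondC φ)
    (b c : S) : S := (hC b c).choose

/-- A chosen witness `y` from condition (C) applied to `b, c`. -/
noncomputable def cy {S : Type*} [Mul S] {φ : S →ₙ* Bicyclic} (hC : CondC φ)
    (b c : S) : S := (hC b c).choose_spec.choose

theorem c_spec {S : Type*} [Mul S] {φ : S →ₙ* Bicyclic} (hC : CondC φ) (b c : S) :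
    cx hC b c * b = cy hC b c * c ∧ rr φ (cx hC b c) = rr φ (cy hC b c) ∧
    ll φ (cx hC b c) = rr φ b + (max (ll φ b) (ll φ c) - ll φ b) ∧
    ll φ (cy hC b c) = rr φ c + (max (ll φ b) (ll φ c) - ll φ c) :=
  (hC b c).choose_spec.choose_spec

/-- Representative-level multiplication: `(a,b) · (c,d) = (x * a, y * d)` where
`x, y` are the witnesses from condition (C) for `b, c`. -/
noncomputable def pairMul {S : Type*} [Mul S] {φ : S →ₙ* Bicyclic} (hC : CondC φ)
    (p q : Sig φ) : Sig φ :=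
  ⟨(cx hC p.1.2 q.1.1 * p.1.1, cy hC p.1.2 q.1.1 * q.1.2),
    sig_mul_ok φ p.2 q.2 (c_spec hC p.1.2 q.1.1).2.2.1
      (c_spec hC p.1.2 q.1.1).2.2.2 (c_spec hC p.1.2 q.1.1).2.1⟩

/-- The multiplication `[a,b][c,d] = [x*a, y*d]` on the set `Q` of `∼`-classes. -/
noncomputable def qmul {S : Type*} [Mul S] {φ : S →ₙ* Bicyclic} (hC : CondC φ)
    (u v : QT φ) : QT φ :=
  cls φ (pairMul hC (Quot.out u) (Quot.out v))

theorem ll_cx_self {S : Type*} [Mul S] {φ : S →ₙ* Bicyclic} (hC : CondC φ)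
    (a : S) : ll φ (cx hC a a) = rr φ a := by
  have h := (c_spec hC a a).2.2.1
  have h2 : max (ll φ a) (ll φ a) = ll φ a := max_self _
  omega

/-- The embedding `θ : S → Q`, `a θ = [x, x*a]` for a chosen `x` with `l x = r a`. -/
noncomputable def theta {S : Type*} [Mul S] {φ : S →ₙ* Bicyclic} (hC : CondC φ)
    (a : S) : QT φ :=
  cls φ ⟨(cx hC a a, cx hC a a * a), (rr_mul_eq φ (ll_cx_self hC a).ge).symm⟩

/-- The inverse `[a,b]⁻¹ = [b,a]` on `Q`. -/
noncomputable def qinv {S : Type*} [Mul S] {φ : S →ₙ* Bicyclic} (u : QT φ) :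
    QT φ :=
  cls φ ⟨((Quot.out u).1.2, (Quot.out u).1.1), (Quot.out u).2.symm⟩

/-!
Up to `∼`, the product `[a,b][c,d] = [x a, y d]` does not depend on the witnesses `x, y` taken
from (C): for two choices, (C) applied to `x, x'` gives `W x = Z x'`, and (B)(i) cancels `c` from
`W y c = Z y' c`. A witness for `(g b, h c)`, multiplied on the right by `g` and `h`, is a witness
for `(b, c)`; this makes the product compatible with `∼`. For associativity, (C) is used twice to
complete the square formed by the witnesses of the four partial products, each time cancelling
with (B)(i). Throughout, `(a,b) ∼ (c,d)` follows from `g a = h c`, `g b = h d`, `l g = r a`,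
`l h = r c` alone, since then `r g = r (g a) = r (h c) = r h`.
-/

def IsMulWitness {S : Type*} [Mul S] (φ : S →ₙ* Bicyclic) (b c x y : S) : Prop :=
  x * b = y * c ∧ rr φ x = rr φ y ∧
    ll φ x = rr φ b + (max (ll φ b) (ll φ c) - ll φ b) ∧
    ll φ y = rr φ c + (max (ll φ b) (ll φ c) - ll φ c)

section Mul

variable {S : Type*} [Mul S] {φ : S →ₙ* Bicyclic}

theorem ll_mul_of_le (φ : S →ₙ* Bicyclic) {x a : S} (h : rr φ a ≤ ll φ x) :
    ll φ (x * a) = ll φ a + (ll φ x - rr φ a) := by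
  have hmul : ll φ (x * a) = ll φ a + (max (ll φ x) (rr φ a) - rr φ a) := by
    simp only [rr, ll, map_mul]; rfl
  rw [hmul, max_eq_left h]

theorem isMulWitness_cx_cy (hC : CondC φ) (b c : S) :
    IsMulWitness φ b c (cx hC b c) (cy hC b c) :=
  c_spec hC b c

namespace IsMulWitness

variable {b c x y : S}

theorem rr_le_ll_left (hw : IsMulWitness φ b c x y) : rr φ b ≤ ll φ x := by
  rw [hw.2.2.1]; exact Nat.le_add_right _ _

theorem rr_le_ll_right (hw : IsMulWitness φ b c x y) : rr φ c ≤ ll φ y := by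
  rw [hw.2.2.2]; exact Nat.le_add_right _ _

theorem ll_eq_of_ll_eq (hw : IsMulWitness φ b c x y) (h : ll φ b = ll φ c) :
    ll φ x = rr φ b ∧ ll φ y = rr φ c := by
  obtain ⟨-, -, hx, hy⟩ := hw
  rw [h, max_self] at hx hy
  omega

end IsMulWitness

theorem simP_of_mul_eq {a b c d g h : S} (hg : ll φ g = rr φ a) (hh : ll φ h = rr φ c)
    (hac : g * a = h * c) (hbd : g * b = h * d) : simP φ (a, b) (c, d) :=
  ⟨g, h, hac, hbd, hg, hh, by rw [← rr_mul_eq φ hg.ge, ← rr_mul_eq φ hh.ge, hac]⟩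

theorem simP_refl (hC : CondC φ) (p : S × S) : simP φ p p :=
  simP_of_mul_eq (ll_cx_self hC p.1) (ll_cx_self hC p.1) rfl rfl

theorem simP_symm {p q : S × S} (h : simP φ p q) : simP φ q p := by
  obtain ⟨x, y, h1, h2, h3, h4, h5⟩ := h
  exact ⟨y, x, h1.symm, h2.symm, h4, h3, h5.symm⟩

end Mul

section Semigroup

variable {S : Type*} [Semigroup S] {φ : S →ₙ* Bicyclic}

theorem simP_trans (hC : CondC φ) {p q z : S × S} (hpq : simP φ p q) (hqz : simP φ q z) :
    simP φ p z := by
  obtain ⟨x, y, hxy₁, hxy₂, hx, hy, hrxy⟩ := hpq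
  obtain ⟨u, v, huv₁, huv₂, hu, hv, hruv⟩ := hqz
  have hw := isMulWitness_cx_cy hC y u
  obtain ⟨hW, hZ⟩ := hw.ll_eq_of_ll_eq (hy.trans hu.symm)
  set W := cx hC y u
  set Z := cy hC y u
  have hWx : ll φ (W * x) = rr φ p.1 := by rw [ll_mul_of_le φ (by omega)]; omega
  have hZv : ll φ (Z * v) = rr φ z.1 := by rw [ll_mul_of_le φ (by omega)]; omega
  refine simP_of_mul_eq hWx hZv ?_ ?_
  · rw [mul_assoc, hxy₁, ← mul_assoc, hw.1, mul_assoc, huv₁, ← mul_assoc]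
  · rw [mul_assoc, hxy₂, ← mul_assoc, hw.1, mul_assoc, huv₂, ← mul_assoc]

theorem sim_equivalence (hC : CondC φ) : Equivalence (sim φ) :=
  ⟨fun p => simP_refl hC p.1, simP_symm, simP_trans hC⟩

theorem IsMulWitness.simP (hBi : CondBi φ) (hC : CondC φ) {a b c d x y x' y' : S}
    (hw : IsMulWitness φ b c x y) (hw' : IsMulWitness φ b c x' y') (hab : rr φ a = rr φ b) :
    simP φ (x * a, y * d) (x' * a, y' * d) := by
  have hv := isMulWitness_cx_cy hC x x'
  obtain ⟨hW, hZ⟩ := hv.ll_eq_of_ll_eq (by rw [hw.2.2.1, hw'.2.2.1])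
  set W := cx hC x x'
  set Z := cy hC x x'
  have hcy := hw.rr_le_ll_right
  have hcy' := hw'.rr_le_ll_right
  have hWy : W * y = Z * y' := by
    refine hBi _ _ c ?_ ?_ ?_
    · rw [ll_mul_of_le φ (by rw [hW, hw.2.1])]; omega
    · rw [ll_mul_of_le φ (by rw [hZ, hw'.2.1])]; omega
    · rw [mul_assoc, ← hw.1, ← mul_assoc, hv.1, mul_assoc, hw'.1, ← mul_assoc]
  refine simP_of_mul_eq (g := W) (h := Z) ?_ ?_ ?_ ?_
  · rw [rr_mul_eq φ (hab.trans_le hw.rr_le_ll_left), hW]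
  · rw [rr_mul_eq φ (hab.trans_le hw'.rr_le_ll_left), hZ]
  · rw [← mul_assoc, hv.1, mul_assoc]
  · rw [← mul_assoc, hWy, mul_assoc]

theorem IsMulWitness.of_mul_left {b c g h x y : S} (hw : IsMulWitness φ (g * b) (h * c) x y)
    (hg : ll φ g = rr φ b) (hh : ll φ h = rr φ c) : IsMulWitness φ b c (x * g) (y * h) := by
  obtain ⟨heq, hr, hx, hy⟩ := hw
  have hgb := ll_mul_of_le φ hg.ge
  have hhc := ll_mul_of_le φ hh.ge
  rw [rr_mul_eq φ hg.ge] at hx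
  rw [rr_mul_eq φ hh.ge] at hy
  refine ⟨by rw [mul_assoc, heq, mul_assoc], ?_, ?_, ?_⟩
  · rw [rr_mul_eq φ (by omega), rr_mul_eq φ (by omega), hr]
  · rw [ll_mul_of_le φ (by omega)]; omega
  · rw [ll_mul_of_le φ (by omega)]; omega

theorem sim_pairMul_congr (hBi : CondBi φ) (hC : CondC φ) {p p' q q' : Sig φ}
    (hp : sim φ p p') (hq : sim φ q q') :
    sim φ (pairMul hC p q) (pairMul hC p' q') := by
  obtain ⟨⟨a, b⟩, hab⟩ := p
  obtain ⟨⟨a', b'⟩, hab'⟩ := p'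
  obtain ⟨⟨c, d⟩, hcd⟩ := q
  obtain ⟨⟨c', d'⟩, hcd'⟩ := q'
  obtain ⟨u, v, hua, hub, hu, hv, -⟩ : simP φ (a, b) (a', b') := hp
  obtain ⟨s, t, hsc, hsd, hs, ht, -⟩ : simP φ (c, d) (c', d') := hq
  dsimp only at hab hab' hua hub hu hv hsc hsd hs ht
  obtain ⟨x, y, hw⟩ : ∃ x y, IsMulWitness φ (u * b) (s * c) x y := hC _ _
  have hw' : IsMulWitness φ (v * b') (t * c') x y := by rwa [← hub, ← hsc]
  have h₁ := (hw.of_mul_left (hu.trans hab) hs).simP hBi hC (d := d)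
    (isMulWitness_cx_cy hC b c) hab
  have h₂ := (hw'.of_mul_left (hv.trans hab') ht).simP hBi hC (d := d')
    (isMulWitness_cx_cy hC b' c') hab'
  rw [mul_assoc, mul_assoc, hua, hsd] at h₁
  rw [mul_assoc, mul_assoc] at h₂
  exact simP_trans hC (simP_symm h₁) h₂

section Assoc

variable {b c d e x y s t x₂ y₂ x₃ y₃ : S}

theorem IsMulWitness.rr_le_ll_of_mul_right (hxy : IsMulWitness φ b c x y)
    (hcd : rr φ c = rr φ d) (h₂ : IsMulWitness φ (y * d) e x₂ y₂) : rr φ x ≤ ll φ x₂ := by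
  rw [hxy.2.1, ← rr_mul_eq φ (hcd ▸ hxy.rr_le_ll_right)]; exact h₂.rr_le_ll_left

theorem assoc_square_right (hBi : CondBi φ) (hC : CondC φ) (hcd : rr φ c = rr φ d)
    (hxy : IsMulWitness φ b c x y) (hst : IsMulWitness φ d e s t)
    (h₂ : IsMulWitness φ (y * d) e x₂ y₂) (h₃ : IsMulWitness φ b (s * c) x₃ y₃) :
    ∃ P R, P * (x₂ * y) = R * s ∧ P * y₂ = R * t ∧ rr φ P = rr φ R ∧ ll φ P = rr φ x₂ ∧
      ll φ R = ll φ y₃ := by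
  have hdy : rr φ d ≤ ll φ y := hcd ▸ hxy.rr_le_ll_right
  have hyd := ll_mul_of_le φ hdy
  have hyx₂ : rr φ y ≤ ll φ x₂ := rr_mul_eq φ hdy ▸ h₂.rr_le_ll_left
  have hx₂y := ll_mul_of_le φ hyx₂
  have hcs : rr φ c ≤ ll φ s := hcd ▸ hst.rr_le_ll_left
  have hsc := ll_mul_of_le φ hcs
  have hy := hxy.2.2.2
  have hs := hst.2.2.1
  have hx₂ := h₂.2.2.1
  have hy₃ := h₃.2.2.2
  rw [rr_mul_eq φ hdy] at hx₂
  rw [rr_mul_eq φ hcs] at hy₃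
  obtain ⟨hPR, hrPR, hP, hR⟩ := isMulWitness_cx_cy hC (x₂ * y) s
  set P := cx hC (x₂ * y) s
  set R := cy hC (x₂ * y) s
  have hsx₂y : ll φ s ≤ ll φ (x₂ * y) := by omega
  rw [max_eq_left hsx₂y, rr_mul_eq φ hyx₂, Nat.sub_self, add_zero] at hP
  rw [max_eq_left hsx₂y] at hR
  refine ⟨P, R, hPR, ?_, hrPR, by omega, by omega⟩
  have hy₂ := h₂.rr_le_ll_right
  have ht := hst.rr_le_ll_right
  refine hBi _ _ e ?_ ?_ ?_
  · rw [ll_mul_of_le φ (by rw [hP, h₂.2.1])]; omega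
  · rw [ll_mul_of_le φ (by rw [hR, ← hst.2.1]; omega)]; omega
  · rw [mul_assoc, ← h₂.1, ← mul_assoc x₂, ← mul_assoc, hPR, mul_assoc, hst.1, mul_assoc]

theorem assoc_square (hBi : CondBi φ) (hC : CondC φ) (hcd : rr φ c = rr φ d)
    (hxy : IsMulWitness φ b c x y) (hst : IsMulWitness φ d e s t)
    (h₂ : IsMulWitness φ (y * d) e x₂ y₂) (h₃ : IsMulWitness φ b (s * c) x₃ y₃) :
    ∃ g h, g * (x₂ * x) = h * x₃ ∧ g * y₂ = h * (y₃ * t) ∧ ll φ g = rr φ x₂ ∧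
      ll φ h = rr φ x₃ := by
  obtain ⟨P, R, hPR, hPRt, hrPR, hP, hR⟩ := assoc_square_right hBi hC hcd hxy hst h₂ h₃
  have hw := isMulWitness_cx_cy hC R y₃
  obtain ⟨hF, hG⟩ := hw.ll_eq_of_ll_eq hR
  set F := cx hC R y₃
  set G := cy hC R y₃
  have hFP : ll φ (F * P) = rr φ x₂ := by rw [ll_mul_of_le φ (by omega)]; omega
  have hGx₃ : ll φ G = rr φ x₃ := hG.trans h₃.2.1.symm
  refine ⟨F * P, G, ?_, ?_, hFP, hGx₃⟩
  · have hxx₂ := hxy.rr_le_ll_of_mul_right hcd h₂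
    have hbx := hxy.rr_le_ll_left
    have hbx₃ := h₃.rr_le_ll_left
    have hx₂x := ll_mul_of_le φ hxx₂
    refine hBi _ _ b ?_ ?_ ?_
    · rw [ll_mul_of_le φ (by rw [hFP, rr_mul_eq φ hxx₂])]; omega
    · rw [ll_mul_of_le φ hGx₃.ge]; omega
    calc F * P * (x₂ * x) * b = F * (P * (x₂ * y)) * c := by simp only [mul_assoc, hxy.1]
      _ = F * R * (s * c) := by rw [hPR]; simp only [mul_assoc]
      _ = G * y₃ * (s * c) := by rw [hw.1]
      _ = G * x₃ * b := by rw [mul_assoc, ← h₃.1, mul_assoc]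
  · rw [mul_assoc, hPRt, ← mul_assoc, hw.1, mul_assoc]

theorem simP_assoc (hBi : CondBi φ) (hC : CondC φ) {a f : S} (hab : rr φ a = rr φ b)
    (hcd : rr φ c = rr φ d) (hxy : IsMulWitness φ b c x y) (hst : IsMulWitness φ d e s t)
    (h₂ : IsMulWitness φ (y * d) e x₂ y₂) (h₃ : IsMulWitness φ b (s * c) x₃ y₃) :
    simP φ (x₂ * (x * a), y₂ * f) (x₃ * a, y₃ * (t * f)) := by
  obtain ⟨g, h, hx, hy, hg, hh⟩ := assoc_square hBi hC hcd hxy hst h₂ h₃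
  have hxx₂ := hxy.rr_le_ll_of_mul_right hcd h₂
  have hxa := rr_mul_eq φ (hab.trans_le hxy.rr_le_ll_left)
  refine simP_of_mul_eq (g := g) (h := h) ?_ ?_ ?_ ?_
  · rw [rr_mul_eq φ (hxa ▸ hxx₂), hg]
  · rw [rr_mul_eq φ (hab.trans_le h₃.rr_le_ll_left), hh]
  · rw [← mul_assoc x₂, ← mul_assoc, hx, mul_assoc]
  · rw [← mul_assoc, hy, mul_assoc, mul_assoc]

theorem sim_pairMul_assoc (hBi : CondBi φ) (hC : CondC φ) (p q w : Sig φ) :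
    sim φ (pairMul hC (pairMul hC p q) w) (pairMul hC p (pairMul hC q w)) := by
  obtain ⟨⟨a, b⟩, hab⟩ := p
  obtain ⟨⟨c, d⟩, hcd⟩ := q
  exact simP_assoc hBi hC hab hcd (isMulWitness_cx_cy hC b c) (isMulWitness_cx_cy hC d _)
    (isMulWitness_cx_cy hC _ _) (isMulWitness_cx_cy hC b _)

end Assoc

end Semigroup

section Quotient

variable {S : Type*} [Semigroup S] {φ : S →ₙ* Bicyclic}

theorem sim_out_cls (hC : CondC φ) (p : Sig φ) : sim φ (Quot.out (cls φ p)) p :=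
  (sim_equivalence hC).eqvGen_iff.mp (Quot.eqvGen_exact (Quot.out_eq _))

theorem qmul_cls_cls (hBi : CondBi φ) (hC : CondC φ) (p q : Sig φ) :
    qmul hC (cls φ p) (cls φ q) = cls φ (pairMul hC p q) :=
  Quot.sound (sim_pairMul_congr hBi hC (sim_out_cls hC p) (sim_out_cls hC q))

end Quotient

theorem stmt11_general {S : Type*} [Semigroup S] (φ : S →ₙ* Bicyclic)
    (hBi : CondBi φ) (hC : CondC φ) :
    ∀ u v w : QT φ, qmul hC (qmul hC u v) w = qmul hC u (qmul hC v w) := by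
  intro u v w
  obtain ⟨p, rfl⟩ : ∃ p, cls φ p = u := Quot.exists_rep u
  obtain ⟨q, rfl⟩ : ∃ q, cls φ q = v := Quot.exists_rep v
  obtain ⟨r, rfl⟩ : ∃ r, cls φ r = w := Quot.exists_rep w
  simp only [qmul_cls_cls hBi hC]
  exact Quot.sound (sim_pairMul_assoc hBi hC p q r)

/-- The multiplication on the set `Q` of `∼`-classes is associative. -/
theorem stmt11 {S : Type*} [Semigroup S] (φ : S →ₙ* Bicyclic)
    (hA : CondA φ) (hBi : CondBi φ) (hBii : CondBii φ) (hC : CondC φ) :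
    ∀ u v w : QT φ, qmul hC (qmul hC u v) w = qmul hC u (qmul hC v w) :=
  stmt11_general φ hBi hC
end

section
/- Let S be a semigroup satisfying conditions (A), (B), (C), and let Q be the semigroup of ~-classes of Σ. For any [a,b] ∈ Q and any x ∈ S with l(x) = r(a), one has [a,b] = [xa, xb]. -/
theorem ll_mul {S : Type*} [Mul S] (φ : S →ₙ* Bicyclic) (x a : S) :
    ll φ (x * a) = ll φ a + (max (ll φ x) (rr φ a) - rr φ a) := by
  simp only [rr, ll, map_mul]; rfl

theorem ll_mul_eq {S : Type*} [Mul S] (φ : S →ₙ* Bicyclic) {x a : S}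
    (h : ll φ x ≤ rr φ a) : ll φ (x * a) = ll φ a := by
  have h1 := ll_mul φ x a
  have h2 : max (ll φ x) (rr φ a) = rr φ a := max_eq_right h
  omega

theorem simP_mul_left {S : Type*} [Semigroup S] (φ : S →ₙ* Bicyclic) {a b x y : S}
    (hx : ll φ x = rr φ a) (hy : ll φ y = rr φ x) :
    simP φ (a, b) (x * a, x * b) :=
  ⟨y * x, y, mul_assoc y x a, mul_assoc y x b,
    by rw [ll_mul_eq φ hy.le, hx], by rw [rr_mul_eq φ hx.ge, hy], rr_mul_eq φ hy.ge⟩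

/-- `[a,b] = [x*a, x*b]` for any `x` with `l x = r a`. -/
theorem stmt13 {S : Type*} [Semigroup S] (φ : S →ₙ* Bicyclic) (hC : CondC φ)
    (a b x : S) (hab : rr φ a = rr φ b) (hx : ll φ x = rr φ a) :
    cls φ (mkSig φ a b hab) =
      cls φ (mkSig φ (x * a) (x * b) (by
        have e₁ := rr_mul_eq φ (a := a) hx.ge
        have e₂ := rr_mul_eq φ (x := x) (a := b) (by omega)
        omega)) :=
  Quot.sound (simP_mul_left φ hx (ll_cx_self hC x))
end
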